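/- arXiv:1402.2017 — 6 statements merged into one kernel-verified Lean document; each statement's English description precedes it below -/
import Mathlib

section
/- Suppose m ≥ r², where r = 1 + ⌊θmax/Δmin⌋. Then for every n₀ ∈ ℕ there exists n with n₀ ≤ n ≤ n₀ + r − 1 such that I_n = {1,…,m}, i.e. the grand coalition (all m cells spike simultaneously) occurs at one of any r consecutive spiking instants. -/
/-- Discrete spike-sequence model of a cooperative pulse-coupled network:
if `m ≥ r²` where `r = 1 + ⌊θmax / Δmin⌋`, then among any `r` consecutive
spiking instants there is one at which the grand coalition occurs. -/
theorem grand_coalition_among_r_consecutive_instants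
    (m : ℕ) (hm : 2 ≤ m)
    (θ : Fin m → ℝ) (hθpos : ∀ i, 0 < θ i)
    (Δ : Fin m → Fin m → ℝ) (hΔpos : ∀ i j : Fin m, i ≠ j → 0 < Δ i j)
    (I : ℕ → Finset (Fin m)) (hInonempty : ∀ n, (I n).Nonempty)
    (s : ℕ → Fin m → ℝ)
    (hs_nonneg : ∀ n (j : Fin m), 0 ≤ s n j)
    (hs_below : ∀ n (j : Fin m), j ∉ I n → s n j + ∑ i ∈ I n, Δ i j < θ j)
    (hs_incr : ∀ n (j : Fin m), j ∉ I n → s n j + ∑ i ∈ I n, Δ i j ≤ s (n + 1) j)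
    (Δmin θmax : ℝ)
    (hΔmin : IsLeast {x : ℝ | ∃ i j : Fin m, i ≠ j ∧ x = Δ i j} Δmin)
    (hθmax : IsGreatest (Set.range θ) θmax)
    (r : ℕ) (hr : r = 1 + ⌊θmax / Δmin⌋₊)
    (hlarge : r ^ 2 ≤ m) :
    ∀ n₀ : ℕ, ∃ n : ℕ, n₀ ≤ n ∧ n ≤ n₀ + r - 1 ∧ I n = Finset.univ := by
  intro n₀
  obtain ⟨⟨i0, j0, hij0, hΔeq⟩, hΔlb⟩ := hΔmin
  have hΔminpos : 0 < Δmin := hΔeq ▸ hΔpos i0 j0 hij0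
  obtain ⟨⟨i1, hθeq⟩, hθub⟩ := hθmax
  have hr1 : 1 ≤ r := by omega
  -- key numeric fact
  have key : ∀ c : ℕ, (c : ℝ) * Δmin < θmax → c < r := by
    intro c hc
    have h1 : (c : ℝ) < θmax / Δmin := (lt_div_iff₀ hΔminpos).mpr hc
    have h2 := Nat.le_floor h1.le
    omega
  -- lower bound on incoming pulses
  have sumlb : ∀ n (j : Fin m), j ∉ I n →
      ((I n).card : ℝ) * Δmin ≤ ∑ i ∈ I n, Δ i j := by
    intro n j hj
    have := Finset.card_nsmul_le_sum (I n) (fun i => Δ i j) Δmin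
      (fun i hi => hΔlb ⟨i, j, fun h => hj (h ▸ hi), rfl⟩)
    simpa [nsmul_eq_mul] using this
  have cardlt : ∀ n (j : Fin m), j ∉ I n → (I n).card < r := by
    intro n j hj
    apply key
    have h1 := hs_below n j hj
    have h2 := hs_nonneg n j
    have h3 := sumlb n j hj
    have h4 : θ j ≤ θmax := hθub ⟨j, rfl⟩
    linarith
  have full : ∀ n, r ≤ (I n).card → I n = Finset.univ := by
    intro n hcard
    by_contra hne
    have : ∃ j, j ∉ I n := by
      by_contra h
      push_neg at h
      exact hne (Finset.eq_univ_iff_forall.mpr h)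
    obtain ⟨j, hj⟩ := this
    have := cardlt n j hj
    omega
  have card1 : ∀ n, (1 : ℝ) ≤ ((I n).card : ℝ) := by
    intro n
    exact_mod_cast Finset.card_pos.mpr (hInonempty n)
  -- every cell spikes at some instant in the window
  have spikes : ∀ j : Fin m, ∃ n ∈ Finset.Ico n₀ (n₀ + r), j ∈ I n := by
    intro j
    by_contra hcon
    push_neg at hcon
    have grow : ∀ k, k < r → (k : ℝ) * Δmin ≤ s (n₀ + k) j := by
      intro k hk
      induction k with
      | zero => simpa using hs_nonneg n₀ j
      | succ k ih =>
        have hk' : k < r := by omega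
        have hmem : n₀ + k ∈ Finset.Ico n₀ (n₀ + r) := by
          simp [Finset.mem_Ico]; omega
        have hj : j ∉ I (n₀ + k) := hcon _ hmem
        have h1 := hs_incr (n₀ + k) j hj
        have h2 := sumlb (n₀ + k) j hj
        have hc1 := card1 (n₀ + k)
        have ihk := ih hk'
        push_cast
        show ((k : ℝ) + 1) * Δmin ≤ s (n₀ + k + 1) j
        nlinarith
    have hmem : n₀ + (r - 1) ∈ Finset.Ico n₀ (n₀ + r) := by
      simp [Finset.mem_Ico]; omega
    have hj : j ∉ I (n₀ + (r - 1)) := hcon _ hmem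
    have h1 := hs_below (n₀ + (r - 1)) j hj
    have h2 := sumlb (n₀ + (r - 1)) j hj
    have hc1 := card1 (n₀ + (r - 1))
    have h3 := grow (r - 1) (by omega)
    have h4 : θ j ≤ θmax := hθub ⟨j, rfl⟩
    have hcast : ((r - 1 : ℕ) : ℝ) = (r : ℝ) - 1 := by
      push_cast [hr1]; ring
    have hrlt : (r : ℝ) * Δmin < θmax := by
      rw [hcast] at h3
      nlinarith
    have := key r hrlt
    omega
  -- pigeonhole
  by_contra hcon
  push_neg at hcon
  have hcards : ∀ n ∈ Finset.Ico n₀ (n₀ + r), (I n).card ≤ r - 1 := by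
    intro n hn
    rw [Finset.mem_Ico] at hn
    have hne := hcon n hn.1 (by omega)
    have : ¬ r ≤ (I n).card := fun h => hne (full n h)
    omega
  have hsub : (Finset.univ : Finset (Fin m)) ⊆ (Finset.Ico n₀ (n₀ + r)).biUnion I := by
    intro j _
    obtain ⟨n, hn, hjn⟩ := spikes j
    exact Finset.mem_biUnion.mpr ⟨n, hn, hjn⟩
  have hm1 : m ≤ ((Finset.Ico n₀ (n₀ + r)).biUnion I).card := by
    have := Finset.card_le_card hsub
    simpa using this
  have hb := Finset.card_biUnion_le (s := Finset.Ico n₀ (n₀ + r)) (t := I)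
  have hsum : ∑ n ∈ Finset.Ico n₀ (n₀ + r), (I n).card ≤ r * (r - 1) := by
    calc ∑ n ∈ Finset.Ico n₀ (n₀ + r), (I n).card
        ≤ ∑ _n ∈ Finset.Ico n₀ (n₀ + r), (r - 1) := Finset.sum_le_sum hcards
      _ = r * (r - 1) := by simp [Finset.sum_const, Nat.card_Ico]
  have hlt : r * (r - 1) < r ^ 2 := by
    have h1 : r * (r - 1) < r * r := Nat.mul_lt_mul_of_pos_left (by omega) (by omega)
    simpa [pow_two] using h1
  omega
end

section
/- Suppose the network is large, i.e. √m ≥ 1 + θmax/Δmin. Then the set {n ∈ ℕ : I_n = {1,…,m}} is infinite; that is, the grand coalition, in which all m cells spike simultaneously, is exhibited at infinitely many spiking instants. -/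
/-- Discrete spike-sequence model of a cooperative pulse-coupled network:
if the network is large, i.e. `√m ≥ 1 + θmax / Δmin`, then the grand coalition
is exhibited at infinitely many spiking instants. -/
theorem grand_coalition_infinitely_often_discrete
    (m : ℕ) (hm : 2 ≤ m)
    (θ : Fin m → ℝ) (hθpos : ∀ i, 0 < θ i)
    (Δ : Fin m → Fin m → ℝ) (hΔpos : ∀ i j : Fin m, i ≠ j → 0 < Δ i j)
    (I : ℕ → Finset (Fin m)) (hInonempty : ∀ n, (I n).Nonempty)
    (s : ℕ → Fin m → ℝ)
    (hs_nonneg : ∀ n (j : Fin m), 0 ≤ s n j)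
    (hs_below : ∀ n (j : Fin m), j ∉ I n → s n j + ∑ i ∈ I n, Δ i j < θ j)
    (hs_incr : ∀ n (j : Fin m), j ∉ I n → s n j + ∑ i ∈ I n, Δ i j ≤ s (n + 1) j)
    (Δmin θmax : ℝ)
    (hΔmin : IsLeast {x : ℝ | ∃ i j : Fin m, i ≠ j ∧ x = Δ i j} Δmin)
    (hθmax : IsGreatest (Set.range θ) θmax)
    (hlarge : 1 + θmax / Δmin ≤ Real.sqrt m) :
    {n : ℕ | I n = Finset.univ}.Infinite := by
  obtain ⟨⟨i₀, j₀, hij₀, hΔeq⟩, hΔlb⟩ := hΔmin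
  have hΔminpos : 0 < Δmin := hΔeq ▸ hΔpos i₀ j₀ hij₀
  obtain ⟨⟨jθ, hjθ⟩, hθub⟩ := hθmax
  have hθmaxpos : 0 < θmax := hjθ ▸ hθpos jθ
  set c : ℝ := θmax / Δmin with hc
  have hcpos : 0 < c := div_pos hθmaxpos hΔminpos
  have hΔle : ∀ i j : Fin m, i ≠ j → Δmin ≤ Δ i j := fun i j hij => hΔlb ⟨i, j, hij, rfl⟩
  have hθle : ∀ j, θ j ≤ θmax := fun j => hθub ⟨j, rfl⟩
  set r : ℕ := ⌊c⌋₊ + 1 with hr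
  have hcr : c < r := by exact_mod_cast Nat.lt_floor_add_one c
  have hrc : (r : ℝ) ≤ c + 1 := by
    have h := Nat.floor_le hcpos.le
    rw [hr]; push_cast; linarith
  have hrpos : 1 ≤ r := Nat.succ_le_succ (Nat.zero_le _)
  -- a cell outside the coalition receives at least Δmin
  have hsum_ge : ∀ n (j : Fin m), j ∉ I n → Δmin ≤ ∑ i ∈ I n, Δ i j := by
    intro n j hj
    obtain ⟨i, hi⟩ := hInonempty n
    have hij : i ≠ j := fun h => hj (h ▸ hi)
    calc Δmin ≤ Δ i j := hΔle i j hij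
      _ ≤ ∑ i ∈ I n, Δ i j :=
        Finset.single_le_sum (fun k hk => (hΔpos k j (fun h => hj (h ▸ hk))).le) hi
  -- every block of r consecutive instants contains a spike of each cell
  have claim1 : ∀ a (j : Fin m), ∃ n ∈ Finset.Ico a (a + r), j ∈ I n := by
    intro a j
    by_contra hcon
    push_neg at hcon
    have key : ∀ t, t < r → (t : ℝ) * Δmin ≤ s (a + t) j := by
      intro t
      induction t with
      | zero => intro _; simpa using hs_nonneg a j
      | succ t ih =>
        intro ht
        have ht' : t < r := Nat.lt_of_succ_lt ht
        have hmem : a + t ∈ Finset.Ico a (a + r) := by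
          rw [Finset.mem_Ico]; omega
        have hj : j ∉ I (a + t) := hcon _ hmem
        have h1 := hs_incr (a + t) j hj
        have h2 := hsum_ge (a + t) j hj
        have h3 := ih ht'
        have heq : a + (t + 1) = (a + t) + 1 := by omega
        rw [heq]
        push_cast
        linarith
    have hmem : a + (r - 1) ∈ Finset.Ico a (a + r) := by
      rw [Finset.mem_Ico]; omega
    have hj : j ∉ I (a + (r - 1)) := hcon _ hmem
    have h1 := key (r - 1) (by omega)
    have h2 := hsum_ge _ j hj
    have h3 := hs_below _ j hj
    have h4 := hθle j
    have hcast : ((r - 1 : ℕ) : ℝ) = (r : ℝ) - 1 := by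
      rw [Nat.cast_sub hrpos]; norm_num
    rw [hcast] at h1
    have hring : ((r : ℝ) - 1) * Δmin = (r : ℝ) * Δmin - Δmin := by ring
    rw [hring] at h1
    have h5 : (r : ℝ) * Δmin < θmax := by linarith
    have h6 : (r : ℝ) < c := by
      rw [hc, lt_div_iff₀ hΔminpos]; exact h5
    linarith
  -- reduce to finding grand coalitions beyond any bound
  suffices hstep : ∀ N, ∃ n, N < n ∧ I n = Finset.univ by
    by_contra hfin
    rw [Set.not_infinite] at hfin
    obtain ⟨N, hN⟩ := hfin.bddAbove
    obtain ⟨n, hn, heq⟩ := hstep N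
    exact absurd (hN heq) (not_le.2 hn)
  intro N
  by_contra hcon
  push_neg at hcon
  set B := Finset.Ico (N + 1) (N + 1 + r) with hB
  -- non-grand coalitions are small
  have hcard_lt : ∀ n ∈ B, ((I n).card : ℝ) < c := by
    intro n hn
    have hnN : N < n := by rw [hB, Finset.mem_Ico] at hn; omega
    have hne := hcon n hnN
    have hex : ∃ j, j ∉ I n := by
      by_contra hall; push_neg at hall
      exact hne (Finset.eq_univ_iff_forall.2 hall)
    obtain ⟨j, hj⟩ := hex
    have h1 : (I n).card • Δmin ≤ ∑ i ∈ I n, Δ i j :=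
      Finset.card_nsmul_le_sum _ _ _ (fun i hi => hΔle i j (fun h => hj (h ▸ hi)))
    rw [nsmul_eq_mul] at h1
    have h2 := hs_below n j hj
    have h3 := hs_nonneg n j
    have h4 := hθle j
    rw [hc, lt_div_iff₀ hΔminpos]
    linarith
  -- each cell spikes in the block, so total coalition size is at least m
  have hm_le : (m : ℝ) ≤ ∑ n ∈ B, ((I n).card : ℝ) := by
    have hsub : (Finset.univ : Finset (Fin m)) ⊆ B.biUnion I := by
      intro j _
      obtain ⟨n, hn, hjn⟩ := claim1 (N + 1) j
      exact Finset.mem_biUnion.2 ⟨n, hn, hjn⟩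
    have h1 : m ≤ (B.biUnion I).card := by
      have h := Finset.card_le_card hsub
      simpa using h
    have h2 : (B.biUnion I).card ≤ ∑ n ∈ B, (I n).card := Finset.card_biUnion_le
    have h3 : m ≤ ∑ n ∈ B, (I n).card := le_trans h1 h2
    exact_mod_cast h3
  have hBne : B.Nonempty := by
    rw [hB]; apply Finset.nonempty_Ico.2; omega
  have hsum_lt : ∑ n ∈ B, ((I n).card : ℝ) < ∑ _n ∈ B, c :=
    Finset.sum_lt_sum_of_nonempty hBne hcard_lt
  have hBcard : B.card = r := by rw [hB, Nat.card_Ico]; omega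
  rw [Finset.sum_const, hBcard, nsmul_eq_mul] at hsum_lt
  have hsqrt : Real.sqrt m * Real.sqrt m = m := Real.mul_self_sqrt (by positivity)
  have hs1 : (1 : ℝ) ≤ Real.sqrt m := by linarith
  have h7 : (r : ℝ) * c ≤ (c + 1) * c := mul_le_mul_of_nonneg_right hrc hcpos.le
  have h8 : (c + 1) * c ≤ Real.sqrt m * (Real.sqrt m - 1) := by
    apply mul_le_mul (by linarith) (by linarith) hcpos.le (by linarith)
  have h9 : Real.sqrt m * (Real.sqrt m - 1) = (m : ℝ) - Real.sqrt m := by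
    rw [mul_sub, hsqrt]; ring
  linarith
end

section
/- (Assertion A) For every n₀ ∈ ℕ and every cell j ∈ {1,…,m} there exists k with n₀ ≤ k ≤ n₀ + r − 1 such that j ∈ I_k; that is, during any r consecutive spiking instants every cell of the network spikes at least once. -/
/-- Assertion (A): during any `r` consecutive spiking instants, where
`r = 1 + ⌊θmax / Δmin⌋`, every cell of the network spikes at least once. -/
theorem every_cell_spikes_among_r_consecutive_instants
    (m : ℕ) (hm : 2 ≤ m)
    (θ : Fin m → ℝ) (hθpos : ∀ i, 0 < θ i)
    (Δ : Fin m → Fin m → ℝ) (hΔpos : ∀ i j : Fin m, i ≠ j → 0 < Δ i j)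
    (I : ℕ → Finset (Fin m)) (hInonempty : ∀ n, (I n).Nonempty)
    (s : ℕ → Fin m → ℝ)
    (hs_nonneg : ∀ n (j : Fin m), 0 ≤ s n j)
    (hs_below : ∀ n (j : Fin m), j ∉ I n → s n j + ∑ i ∈ I n, Δ i j < θ j)
    (hs_incr : ∀ n (j : Fin m), j ∉ I n → s n j + ∑ i ∈ I n, Δ i j ≤ s (n + 1) j)
    (Δmin θmax : ℝ)
    (hΔmin : IsLeast {x : ℝ | ∃ i j : Fin m, i ≠ j ∧ x = Δ i j} Δmin)
    (hθmax : IsGreatest (Set.range θ) θmax)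
    (r : ℕ) (hr : r = 1 + ⌊θmax / Δmin⌋₊) :
    ∀ (n₀ : ℕ) (j : Fin m), ∃ k : ℕ, n₀ ≤ k ∧ k ≤ n₀ + r - 1 ∧ j ∈ I k := by
  -- Δmin is positive
  have hΔmin_pos : 0 < Δmin := by
    obtain ⟨i, jj, hij, hx⟩ := hΔmin.1
    rw [hx]; exact hΔpos i jj hij
  -- key: if j ∉ I n then the received pulse sum is at least Δmin
  have hsum : ∀ n (j : Fin m), j ∉ I n → Δmin ≤ ∑ i ∈ I n, Δ i j := by
    intro n j hj
    obtain ⟨i, hi⟩ := hInonempty n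
    have hij : i ≠ j := fun h => hj (h ▸ hi)
    calc Δmin ≤ Δ i j := hΔmin.2 ⟨i, j, hij, rfl⟩
      _ ≤ ∑ i ∈ I n, Δ i j := by
          refine Finset.single_le_sum (f := fun i => Δ i j) (fun x hx => ?_) hi
          have hxj : x ≠ j := fun h => hj (h ▸ hx)
          exact (hΔpos x j hxj).le
  intro n₀ j
  by_contra hcon
  push_neg at hcon
  have hnot : ∀ k, n₀ ≤ k → k ≤ n₀ + (r - 1) → j ∉ I k := by
    intro k h1 h2 hjk
    have hr1 : 1 ≤ r := by omega
    exact absurd hjk (hcon k h1 (by omega)).elim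
  -- growth of satisfaction
  have hgrow : ∀ t, t ≤ r - 1 → (t : ℝ) * Δmin ≤ s (n₀ + t) j := by
    intro t ht
    induction t with
    | zero => simpa using hs_nonneg n₀ j
    | succ t ih =>
      have ht' : t ≤ r - 1 := by omega
      have hj : j ∉ I (n₀ + t) := hnot _ (by omega) (by omega)
      have := hs_incr (n₀ + t) j hj
      have hsum' := hsum (n₀ + t) j hj
      have := ih ht'
      push_cast
      have : (t : ℝ) * Δmin + Δmin ≤ s (n₀ + t) j + ∑ i ∈ I (n₀ + t), Δ i j :=
        add_le_add (ih ht') hsum'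
      calc ((t : ℝ) + 1) * Δmin = (t : ℝ) * Δmin + Δmin := by ring
        _ ≤ s (n₀ + t) j + ∑ i ∈ I (n₀ + t), Δ i j := this
        _ ≤ s (n₀ + t + 1) j := hs_incr (n₀ + t) j hj
        _ = s (n₀ + (t + 1)) j := by ring_nf
  -- contradiction at instant n₀ + (r-1)
  have hj : j ∉ I (n₀ + (r - 1)) := hnot _ (by omega) (by omega)
  have h1 : ((r : ℝ) - 1) * Δmin ≤ s (n₀ + (r - 1)) j := by
    have := hgrow (r - 1) le_rfl
    have hr1 : 1 ≤ r := by omega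
    have : ((r - 1 : ℕ) : ℝ) = (r : ℝ) - 1 := by push_cast [hr1]; ring
    rw [← this]; exact hgrow (r - 1) le_rfl
  have h2 : s (n₀ + (r - 1)) j + ∑ i ∈ I (n₀ + (r - 1)), Δ i j < θ j :=
    hs_below _ j hj
  have h3 : (r : ℝ) * Δmin ≤ s (n₀ + (r - 1)) j + ∑ i ∈ I (n₀ + (r - 1)), Δ i j := by
    have := add_le_add h1 (hsum _ j hj)
    linarith
  have h4 : θ j ≤ θmax := hθmax.2 ⟨j, rfl⟩
  have h5 : θmax < (r : ℝ) * Δmin := by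
    have hlt : θmax / Δmin < (r : ℕ) := by
      rw [hr]; push_cast
      have := Nat.lt_succ_floor (θmax / Δmin)
      push_cast at this
      linarith
    calc θmax = θmax / Δmin * Δmin := by field_simp
      _ < (r : ℝ) * Δmin := by
          exact mul_lt_mul_of_pos_right hlt hΔmin_pos
  linarith
end

section
/- (Assertion B) If at some index n the coalition has at least r members, i.e. |I_n| ≥ r where r = 1 + ⌊θmax/Δmin⌋, then I_n = {1,…,m}; that is, if at some spiking instant at least r cells spike simultaneously, then all m cells spike simultaneously at that instant. -/
/-- Assertion (B): if at some spiking instant at least `r = 1 + ⌊θmax / Δmin⌋`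
cells spike simultaneously, then all `m` cells spike simultaneously
at that instant. -/
theorem coalition_of_r_cells_is_grand_coalition
    (m : ℕ) (hm : 2 ≤ m)
    (θ : Fin m → ℝ) (hθpos : ∀ i, 0 < θ i)
    (Δ : Fin m → Fin m → ℝ) (hΔpos : ∀ i j : Fin m, i ≠ j → 0 < Δ i j)
    (I : ℕ → Finset (Fin m)) (hInonempty : ∀ n, (I n).Nonempty)
    (s : ℕ → Fin m → ℝ)
    (hs_nonneg : ∀ n (j : Fin m), 0 ≤ s n j)
    (hs_below : ∀ n (j : Fin m), j ∉ I n → s n j + ∑ i ∈ I n, Δ i j < θ j)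
    (hs_incr : ∀ n (j : Fin m), j ∉ I n → s n j + ∑ i ∈ I n, Δ i j ≤ s (n + 1) j)
    (Δmin θmax : ℝ)
    (hΔmin : IsLeast {x : ℝ | ∃ i j : Fin m, i ≠ j ∧ x = Δ i j} Δmin)
    (hθmax : IsGreatest (Set.range θ) θmax)
    (r : ℕ) (hr : r = 1 + ⌊θmax / Δmin⌋₊)
    (n : ℕ) (hcard : r ≤ (I n).card) :
    I n = Finset.univ := by
  -- Δmin is positive
  obtain ⟨⟨i0, j0, hij0, hEq0⟩, hlb⟩ := hΔmin
  have hΔminpos : 0 < Δmin := hEq0 ▸ hΔpos i0 j0 hij0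
  -- suppose some j is not in I n
  by_contra hne
  obtain ⟨j, -, hjnot⟩ := Finset.not_subset.mp (fun h => hne (Finset.eq_univ_of_forall (fun x => h (Finset.mem_univ x))))
  have hbound : (I n).card • Δmin ≤ ∑ i ∈ I n, Δ i j := by
    apply Finset.card_nsmul_le_sum
    intro i hi
    exact hlb ⟨i, j, fun h => hjnot (h ▸ hi), rfl⟩
  have hθj : θ j ≤ θmax := hθmax.2 ⟨j, rfl⟩
  have hfl : θmax < (r : ℝ) * Δmin := by
    rw [hr]
    push_cast
    have := Nat.lt_succ_floor (θmax / Δmin)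
    calc θmax = θmax / Δmin * Δmin := by field_simp
    _ < ((⌊θmax / Δmin⌋₊ : ℝ) + 1) * Δmin := by
        apply mul_lt_mul_of_pos_right _ hΔminpos
        exact_mod_cast this
    _ = (1 + (⌊θmax / Δmin⌋₊ : ℝ)) * Δmin := by ring
  have hlt := hs_below n j hjnot
  have h1 : (r : ℝ) * Δmin ≤ (I n).card * Δmin :=
    mul_le_mul_of_nonneg_right (by exact_mod_cast hcard) hΔminpos.le
  have h2 : ((I n).card : ℝ) * Δmin ≤ ∑ i ∈ I n, Δ i j := by
    simpa [nsmul_eq_mul] using hbound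
  have := hs_nonneg n j
  linarith
end

section
/- (Core inequality of Theorem 2) Let θ_i, θ_j, v_j, M_i, δ, Θ, t₁, S be real numbers with θ_i, θ_j, v_j, M_i, δ, Θ > 0, θ_j ≤ Θ, and suppose the similarity inequality θ_i/M_i ≥ (1 − δ/Θ)·(θ_j/v_j) holds. If t₁ ≥ θ_i/M_i and S ≥ v_j·t₁, then S ≥ θ_j − δ, and hence S + δ ≥ θ_j. -/
/-- Core inequality of Theorem 2: under the similarity inequality
`θᵢ/Mᵢ ≥ (1 - δ/Θ) * (θⱼ/vⱼ)`, if `t₁ ≥ θᵢ/Mᵢ` and `S ≥ vⱼ * t₁`, then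
`S ≥ θⱼ - δ`, and hence `S + δ ≥ θⱼ`. -/
theorem core_inequality_theorem2
    (θi θj vj Mi δ Θ t₁ S : ℝ)
    (hθi : 0 < θi) (hθj : 0 < θj) (hvj : 0 < vj) (hMi : 0 < Mi)
    (hδ : 0 < δ) (hΘ : 0 < Θ) (hθjΘ : θj ≤ Θ)
    (hsim : (1 - δ / Θ) * (θj / vj) ≤ θi / Mi)
    (ht₁ : θi / Mi ≤ t₁) (hS : vj * t₁ ≤ S) :
    θj - δ ≤ S ∧ θj ≤ S + δ := by
  have h1 : (1 - δ / Θ) * θj ≤ vj * t₁ := by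
    have := mul_le_mul_of_nonneg_left (hsim.trans ht₁) hvj.le
    calc (1 - δ / Θ) * θj = vj * ((1 - δ / Θ) * (θj / vj)) := by
          field_simp
      _ ≤ vj * t₁ := this
  have h2 : θj - δ ≤ (1 - δ / Θ) * θj := by
    have : δ * θj / Θ ≤ δ := by
      rw [div_le_iff₀ hΘ]
      nlinarith
    have e : (1 - δ / Θ) * θj = θj - δ * θj / Θ := by ring
    linarith [e ▸ le_refl ((1 - δ / Θ) * θj)]
  constructor <;> nlinarith
end

section
/- (One-step grand coalition lemma) Let m ≥ 2 cells have thresholds θ_k > 0 and rate constants 0 < v_k ≤ M_k (k = 1,…,m), let δ > 0 and Θ = max_k θ_k, and assume the similarity inequality min_k(θ_k/M_k) / max_k(θ_k/v_k) ≥ 1 − δ/Θ. Let a < b be real numbers and for each k let s_k : [a,b) → ℝ be continuous with s_k(a) = 0, differentiable on (a,b) with v_k ≤ s_k′(τ) ≤ M_k for all τ ∈ (a,b), and suppose the left limits L_k := lim_{τ→b⁻} s_k(τ) exist. If L_i ≥ θ_i for some cell i, then L_j ≥ θ_j − δ for every cell j; consequently L_j + δ ≥ θ_j for every j, so that when one cell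 reaches its goal at time b, every other cell is brought to its goal by any pulse of size at least δ and all cells spike simultaneously at b. -/
open Filter Topology Set

/-- One-step grand coalition lemma: if `m` similar cells have their
satisfaction variables reset to `0` at time `a` and evolve with growth rates
between `v k` and `M k` on `(a, b)`, and one cell reaches its goal as
`τ → b⁻`, then every cell `j` satisfies `L j ≥ θ j - δ`, hence
`L j + δ ≥ θ j`: any pulse of size at least `δ` brings every cell to its
goal, and all cells spike simultaneously at `b`. -/
theorem one_step_grand_coalition
    (m : ℕ) (hm : 2 ≤ m)
    (θ v M : Fin m → ℝ)
    (hθ : ∀ k, 0 < θ k) (hv : ∀ k, 0 < v k) (hvM : ∀ k, v k ≤ M k)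
    (δ : ℝ) (hδ : 0 < δ)
    (Θ : ℝ) (hΘ : IsGreatest (Set.range θ) Θ)
    (hsim :
      1 - δ / Θ ≤
        (Finset.univ.inf' (Finset.univ_nonempty_iff.mpr ⟨⟨0, by omega⟩⟩)
            (fun k : Fin m => θ k / M k)) /
        (Finset.univ.sup' (Finset.univ_nonempty_iff.mpr ⟨⟨0, by omega⟩⟩)
            (fun k : Fin m => θ k / v k)))
    (a b : ℝ) (hab : a < b)
    (s : Fin m → ℝ → ℝ)
    (hsa : ∀ k, s k a = 0)
    (hcont : ∀ k, ContinuousOn (s k) (Set.Ico a b))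
    (hderiv : ∀ k, ∀ τ ∈ Set.Ioo a b,
      ∃ d : ℝ, HasDerivAt (s k) d τ ∧ v k ≤ d ∧ d ≤ M k)
    (L : Fin m → ℝ)
    (hL : ∀ k, Tendsto (s k) (𝓝[<] b) (𝓝 (L k)))
    (i : Fin m) (hi : θ i ≤ L i) :
    ∀ j : Fin m, θ j - δ ≤ L j ∧ θ j ≤ L j + δ := by

  intro j
  have hne : (Finset.univ : Finset (Fin m)).Nonempty := ⟨i, Finset.mem_univ i⟩
  have hΘpos : 0 < Θ := lt_of_lt_of_le (hθ i) (hΘ.2 ⟨i, rfl⟩)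
  have hθleΘ : ∀ k, θ k ≤ Θ := fun k => hΘ.2 ⟨k, rfl⟩
  set I := Finset.univ.inf' hne (fun k : Fin m => θ k / M k) with hI
  set S := Finset.univ.sup' hne (fun k : Fin m => θ k / v k) with hS
  have hsim' : 1 - δ / Θ ≤ I / S := hsim
  have hSpos : 0 < S :=
    lt_of_lt_of_le (div_pos (hθ i) (hv i)) (Finset.le_sup' (fun k : Fin m => θ k / v k) (Finset.mem_univ i))
  -- derivative bounds ⇒ bounds on s k τ for τ ∈ Ico a b
  have hdiff : ∀ k, DifferentiableOn ℝ (s k) (interior (Set.Ico a b)) := by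
    intro k
    rw [interior_Ico]
    intro τ hτ
    obtain ⟨d, hd, _, _⟩ := hderiv k τ hτ
    exact hd.differentiableAt.differentiableWithinAt
  have hlowbd : ∀ k, ∀ τ ∈ Set.Ico a b, v k * (τ - a) ≤ s k τ := by
    intro k τ hτ
    have := (convex_Ico a b).mul_sub_le_image_sub_of_le_deriv (hcont k) (hdiff k)
      (by
        intro x hx
        rw [interior_Ico] at hx
        obtain ⟨d, hd, hd1, _⟩ := hderiv k x hx
        rw [hd.deriv]; exact hd1)
      a ⟨le_refl a, hab⟩ τ hτ hτ.1
    rw [hsa k] at this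
    linarith
  have hupbd : ∀ k, ∀ τ ∈ Set.Ico a b, s k τ ≤ M k * (τ - a) := by
    intro k τ hτ
    have := (convex_Ico a b).image_sub_le_mul_sub_of_deriv_le (hcont k) (hdiff k)
      (by
        intro x hx
        rw [interior_Ico] at hx
        obtain ⟨d, hd, _, hd2⟩ := hderiv k x hx
        rw [hd.deriv]; exact hd2)
      a ⟨le_refl a, hab⟩ τ hτ hτ.1
    rw [hsa k] at this
    linarith
  have hmem : Set.Ioo a b ∈ 𝓝[<] b := Ioo_mem_nhdsLT_of_mem ⟨hab, le_refl b⟩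
  have hlin : ∀ c : ℝ, Tendsto (fun τ : ℝ => c * (τ - a)) (𝓝[<] b) (𝓝 (c * (b - a))) := by
    intro c
    exact ((continuous_const.mul (continuous_id.sub continuous_const)).tendsto b).mono_left
      nhdsWithin_le_nhds
  have hLlow : ∀ k, v k * (b - a) ≤ L k := by
    intro k
    refine le_of_tendsto_of_tendsto (hlin (v k)) (hL k) ?_
    · filter_upwards [hmem] with τ hτ
      exact hlowbd k τ ⟨le_of_lt hτ.1, hτ.2⟩
  have hLup : L i ≤ M i * (b - a) := by
    refine le_of_tendsto_of_tendsto (hL i) (hlin (M i)) ?_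
    filter_upwards [hmem] with τ hτ
    exact hupbd i τ ⟨le_of_lt hτ.1, hτ.2⟩
  have hMipos : 0 < M i := lt_of_lt_of_le (hv i) (hvM i)
  have hba : θ i / M i ≤ b - a := by
    rw [div_le_iff₀ hMipos]
    nlinarith [hLup, hi]
  have hIle : I ≤ b - a := le_trans (Finset.inf'_le _ (Finset.mem_univ i)) hba
  have hSI : (1 - δ / Θ) * S ≤ I := (le_div_iff₀ hSpos).mp hsim'
  have hjS : θ j / v j ≤ S := Finset.le_sup' (fun k : Fin m => θ k / v k) (Finset.mem_univ j)
  have h1 : θ j - δ ≤ L j := by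
    rcases le_or_gt 0 (1 - δ / Θ) with hc | hc
    · have h2 : (1 - δ / Θ) * (θ j / v j) ≤ b - a :=
        le_trans (le_trans (mul_le_mul_of_nonneg_left hjS hc) hSI) hIle
      have h3 : v j * ((1 - δ / Θ) * (θ j / v j)) ≤ L j :=
        le_trans (mul_le_mul_of_nonneg_left h2 (le_of_lt (hv j))) (hLlow j)
      have h4 : v j * ((1 - δ / Θ) * (θ j / v j)) = (1 - δ / Θ) * θ j := by
        rw [mul_comm (v j), mul_assoc, div_mul_cancel₀ _ (ne_of_gt (hv j))]
      rw [h4] at h3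
      have h5 : θ j * (δ / Θ) ≤ δ := by
        rw [mul_div_assoc', div_le_iff₀ hΘpos]
        nlinarith [hθleΘ j]
      have h6 : (1 - δ / Θ) * θ j = θ j - θ j * (δ / Θ) := by ring
      linarith [h3, h5, h6.ge, h6.le]
    · have hΘδ : Θ < δ := by
        have h7 : 1 < δ / Θ := by linarith
        rw [lt_div_iff₀ hΘpos] at h7
        linarith
      have : 0 ≤ v j * (b - a) := le_of_lt (mul_pos (hv j) (by linarith))
      nlinarith [hLlow j, hθleΘ j]
  exact ⟨h1, by linarith⟩
end
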